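/- arXiv:2111.14006 — 2 statements merged into one kernel-verified Lean document; each statement's English description precedes it below -/
import Mathlib

section
/- (TLB residual formula, Eq. (4.2)) Suppose the Lanczos L-biorthogonalization data up to step m exists, D and X_0 are tensors, R_0 = D − L(X_0) ≠ 0, V_1 = R_0/‖R_0‖, and y ∈ ℝ^m satisfies the tridiagonal system T_m y = ‖R_0‖ e_1. Then the TLB iterate X_m = X_0 + Σ_{k=1}^m y_k V_k has residual D − L(X_m) = −δ_{m+1} y_m V_{m+1}, where y_m is the last entry of y. -/
open scoped Matrix

/-- A tensor in `ℝ^{I₁ × ⋯ × I_N}`: a real-valued function on multi-indices. -/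
abbrev Tensor {N : ℕ} (I : Fin N → ℕ) := (∀ n, Fin (I n)) → ℝ

/-- Inner product `⟨X, Y⟩ = ∑ᵢ X(i) Y(i)`. -/
noncomputable def tinner {N : ℕ} {I : Fin N → ℕ} (X Y : Tensor I) : ℝ :=
  ∑ i : ∀ n, Fin (I n), X i * Y i

/-- Norm `‖X‖ = ⟨X, X⟩^{1/2}`. -/
noncomputable def tnorm {N : ℕ} {I : Fin N → ℕ} (X : Tensor I) : ℝ :=
  Real.sqrt (tinner X X)

/-- The Sylvester operator `L(X) = X ×₁ A₁ + ⋯ + X ×_N A_N`. -/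
noncomputable def sylvOp {N : ℕ} {I : Fin N → ℕ}
    (A : ∀ n, Matrix (Fin (I n)) (Fin (I n)) ℝ) (X : Tensor I) : Tensor I :=
  fun i => ∑ n : Fin N, ∑ j : Fin (I n), A n (i n) j * X (Function.update i n j)

/-- The transposed Sylvester operator `L^T`, with each `Aₙ` replaced by `Aₙᵀ`. -/
noncomputable def sylvOpT {N : ℕ} {I : Fin N → ℕ}
    (A : ∀ n, Matrix (Fin (I n)) (Fin (I n)) ℝ) : Tensor I → Tensor I :=
  sylvOp (fun n => (A n)ᵀ)

/-- The Lanczos `L`-biorthogonalization data up to step `m` (Algorithm 1),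
with no breakdown: `δ_{j+1} ≠ 0` and `β_{j+1} ≠ 0` for `j = 1,…,m`. -/
structure LanczosData {N : ℕ} {I : Fin N → ℕ}
    (A : ∀ n, Matrix (Fin (I n)) (Fin (I n)) ℝ) (m : ℕ) where
  V : ℕ → Tensor I
  W : ℕ → Tensor I
  Vb : ℕ → Tensor I
  Wb : ℕ → Tensor I
  α : ℕ → ℝ
  δ : ℕ → ℝ
  β : ℕ → ℝ
  hV0 : V 0 = 0
  hW0 : W 0 = 0
  hδ1 : δ 1 = 0
  hβ1 : β 1 = 0
  hWLV1 : tinner (W 1) (sylvOp A (V 1)) = 1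
  hα : ∀ j, 1 ≤ j → j ≤ m →
    α j = tinner (sylvOp A (sylvOp A (V j))) (W j)
  hVb : ∀ j, 1 ≤ j → j ≤ m →
    Vb (j + 1) = sylvOp A (V j) - α j • V j - β j • V (j - 1)
  hWb : ∀ j, 1 ≤ j → j ≤ m →
    Wb (j + 1) = sylvOpT A (W j) - α j • W j - δ j • W (j - 1)
  hδ : ∀ j, 1 ≤ j → j ≤ m →
    δ (j + 1) = Real.sqrt |tinner (Wb (j + 1)) (sylvOp A (Vb (j + 1)))|
  hδne : ∀ j, 1 ≤ j → j ≤ m → δ (j + 1) ≠ 0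
  hβ : ∀ j, 1 ≤ j → j ≤ m →
    β (j + 1) = tinner (Wb (j + 1)) (sylvOp A (Vb (j + 1))) / δ (j + 1)
  hβne : ∀ j, 1 ≤ j → j ≤ m → β (j + 1) ≠ 0
  hVnext : ∀ j, 1 ≤ j → j ≤ m → V (j + 1) = (δ (j + 1))⁻¹ • Vb (j + 1)
  hWnext : ∀ j, 1 ≤ j → j ≤ m → W (j + 1) = (β (j + 1))⁻¹ • Wb (j + 1)

/-- The `m × m` tridiagonal matrix `T_m` with (1-based) entries
`(T_m)_{jj} = α_j`, `(T_m)_{j,j-1} = δ_j`, `(T_m)_{j,j+1} = β_{j+1}`. -/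
noncomputable def triMat (a d b : ℕ → ℝ) (m : ℕ) : Matrix (Fin m) (Fin m) ℝ :=
  Matrix.of fun i j =>
    if (i : ℕ) = (j : ℕ) then a ((i : ℕ) + 1)
    else if (i : ℕ) = (j : ℕ) + 1 then d ((i : ℕ) + 1)
    else if (i : ℕ) + 1 = (j : ℕ) then b ((j : ℕ) + 1)
    else 0

section
variable {N : ℕ} {I : Fin N → ℕ} (A : ∀ n, Matrix (Fin (I n)) (Fin (I n)) ℝ)

lemma sylvOp_add (X Y : Tensor I) : sylvOp A (X + Y) = sylvOp A X + sylvOp A Y := by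
  funext i
  simp [sylvOp, mul_add, Finset.sum_add_distrib]

lemma sylvOp_smul (c : ℝ) (X : Tensor I) : sylvOp A (c • X) = c • sylvOp A X := by
  funext i
  simp [sylvOp, Finset.mul_sum, mul_left_comm]

noncomputable def sylvLM : Tensor I →ₗ[ℝ] Tensor I where
  toFun := sylvOp A
  map_add' := sylvOp_add A
  map_smul' := sylvOp_smul A

lemma tnorm_pos {X : Tensor I} (hX : X ≠ 0) : 0 < tnorm X := by
  apply Real.sqrt_pos.mpr
  obtain ⟨i0, hi0⟩ : ∃ i, X i ≠ 0 := by
    by_contra h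
    push_neg at h
    exact hX (funext h)
  apply Finset.sum_pos' (fun i _ => mul_self_nonneg _)
  exact ⟨i0, Finset.mem_univ _, mul_pos_iff.mpr
    (by rcases hi0.lt_or_gt with h | h; exacts [Or.inr ⟨h, h⟩, Or.inl ⟨h, h⟩])⟩
end

/-- TLB residual formula, Eq. (4.2): if `T_m y = ‖R₀‖ e₁`, then
the TLB iterate `X_m = X₀ + ∑ₖ yₖ Vₖ` has residual
`D - L(X_m) = -δ_{m+1} y_m V_{m+1}`. -/

theorem tlb_residual {N : ℕ} (hN : 1 ≤ N) (I : Fin N → ℕ) (hI : ∀ n, 0 < I n)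
    (A : ∀ n, Matrix (Fin (I n)) (Fin (I n)) ℝ) (m : ℕ) (hm : 1 ≤ m)
    (L : LanczosData A m) (D X0 R0 : Tensor I)
    (hR0 : R0 = D - sylvOp A X0) (hR0ne : R0 ≠ 0)
    (hV1 : L.V 1 = (tnorm R0)⁻¹ • R0) (y : Fin m → ℝ)
    (hy : ∀ i : Fin m, ∑ k : Fin m, triMat L.α L.δ L.β m i k * y k =
      if (i : ℕ) = 0 then tnorm R0 else 0)
    (Xm : Tensor I) (hXm : Xm = X0 + ∑ k : Fin m, y k • L.V ((k : ℕ) + 1)) :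
    D - sylvOp A Xm = -(L.δ (m + 1) * y ⟨m - 1, by omega⟩) • L.V (m + 1) := by
  classical
  set T := triMat L.α L.δ L.β m with hT
  have hnorm : tnorm R0 ≠ 0 := (tnorm_pos hR0ne).ne'
  have hcol : ∀ k : Fin m, sylvOp A (L.V ((k : ℕ) + 1)) =
      (∑ i : Fin m, T i k • L.V ((i : ℕ) + 1)) +
      (if (k : ℕ) = m - 1 then L.δ (m + 1) • L.V (m + 1) else 0) := by
    intro k
    have hkm : (k : ℕ) + 1 ≤ m := k.isLt
    have hVb' := L.hVb ((k : ℕ) + 1) (by omega) hkm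
    have hVn' := L.hVnext ((k : ℕ) + 1) (by omega) hkm
    have hδne' := L.hδne ((k : ℕ) + 1) (by omega) hkm
    have hrec : sylvOp A (L.V ((k : ℕ) + 1)) =
        L.δ ((k : ℕ) + 2) • L.V ((k : ℕ) + 2) + L.α ((k : ℕ) + 1) • L.V ((k : ℕ) + 1)
          + L.β ((k : ℕ) + 1) • L.V (k : ℕ) := by
      have h1 : L.δ ((k : ℕ) + 1 + 1) • L.V ((k : ℕ) + 1 + 1) = L.Vb ((k : ℕ) + 1 + 1) := by
        rw [hVn', smul_smul, mul_inv_cancel₀ hδne', one_smul]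
      have h2 : (k : ℕ) + 1 - 1 = (k : ℕ) := by omega
      rw [show (k : ℕ) + 2 = (k : ℕ) + 1 + 1 from rfl, h1, hVb', h2]
      abel
    have hterm : ∀ i : Fin m, T i k • L.V ((i : ℕ) + 1) =
        ((if (i : ℕ) = (k : ℕ) then L.α ((k : ℕ) + 1) • L.V ((k : ℕ) + 1) else 0)
        + (if (i : ℕ) = (k : ℕ) + 1 then L.δ ((k : ℕ) + 2) • L.V ((k : ℕ) + 2) else 0))
        + (if (i : ℕ) + 1 = (k : ℕ) then L.β ((k : ℕ) + 1) • L.V (k : ℕ) else 0) := by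
      intro i
      simp only [hT, triMat, Matrix.of_apply]
      by_cases h1 : (i : ℕ) = (k : ℕ)
      · rw [if_pos h1, if_pos h1, if_neg (by omega), if_neg (by omega), h1]
        abel
      · rw [if_neg h1, if_neg h1]
        by_cases h2 : (i : ℕ) = (k : ℕ) + 1
        · rw [if_pos h2, if_pos h2, if_neg (by omega), h2]
          abel
        · rw [if_neg h2, if_neg h2]
          by_cases h3 : (i : ℕ) + 1 = (k : ℕ)
          · rw [if_pos h3, if_pos h3, h3]
            abel
          · rw [if_neg h3, if_neg h3, zero_smul]
            abel
    rw [hrec, Finset.sum_congr rfl (fun i _ => hterm i),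
      Finset.sum_add_distrib, Finset.sum_add_distrib]
    have S1 : (∑ i : Fin m, if (i : ℕ) = (k : ℕ) then
        L.α ((k : ℕ) + 1) • L.V ((k : ℕ) + 1) else 0)
        = L.α ((k : ℕ) + 1) • L.V ((k : ℕ) + 1) := by
      rw [Finset.sum_eq_single k (fun b _ hb => if_neg (fun h => hb (Fin.ext h)))
        (fun h => absurd (Finset.mem_univ k) h)]
      exact if_pos rfl
    have S3 : (∑ i : Fin m, if (i : ℕ) + 1 = (k : ℕ) then
        L.β ((k : ℕ) + 1) • L.V (k : ℕ) else 0)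
        = L.β ((k : ℕ) + 1) • L.V (k : ℕ) := by
      by_cases hk0 : (k : ℕ) = 0
      · rw [hk0, L.hV0, smul_zero]
        exact Finset.sum_eq_zero (fun i _ => if_neg (by omega))
      · rw [Finset.sum_eq_single (⟨(k : ℕ) - 1, by omega⟩ : Fin m)
          (fun b _ hb => if_neg (fun h => hb (Fin.ext (by simp at h ⊢; omega))))
          (fun h => absurd (Finset.mem_univ _) h)]
        exact if_pos (by simp; omega)
    rw [S1, S3]
    by_cases hc : (k : ℕ) = m - 1
    · rw [if_pos hc]
      have h2 : (k : ℕ) + 2 = m + 1 := by omega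
      have S2 : (∑ i : Fin m, if (i : ℕ) = (k : ℕ) + 1 then
          L.δ ((k : ℕ) + 2) • L.V ((k : ℕ) + 2) else 0) = 0 :=
        Finset.sum_eq_zero (fun i _ => if_neg (by have := i.isLt; omega))
      rw [S2, h2]
      abel
    · rw [if_neg hc]
      have hlt : (k : ℕ) + 1 < m := by omega
      have S2 : (∑ i : Fin m, if (i : ℕ) = (k : ℕ) + 1 then
          L.δ ((k : ℕ) + 2) • L.V ((k : ℕ) + 2) else 0)
          = L.δ ((k : ℕ) + 2) • L.V ((k : ℕ) + 2) := by
        rw [Finset.sum_eq_single (⟨(k : ℕ) + 1, hlt⟩ : Fin m)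
          (fun b _ hb => if_neg (fun h => hb (Fin.ext (by simpa using h))))
          (fun h => absurd (Finset.mem_univ _) h)]
        exact if_pos rfl
      rw [S2]
      abel
  have hLin : sylvOp A Xm = sylvOp A X0 + ∑ k : Fin m, y k • sylvOp A (L.V ((k : ℕ) + 1)) := by
    rw [hXm]
    show sylvLM A _ = sylvLM A X0 + ∑ k : Fin m, y k • sylvLM A (L.V ((k : ℕ) + 1))
    rw [map_add, map_sum]
    simp_rw [map_smul]
  have hstep : D - sylvOp A Xm
      = R0 - ∑ k : Fin m, y k • sylvOp A (L.V ((k : ℕ) + 1)) := by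
    rw [hLin, hR0]; abel
  rw [hstep, Finset.sum_congr rfl (fun k _ => by rw [hcol k])]
  simp_rw [smul_add]
  rw [Finset.sum_add_distrib]
  have hsec : (∑ k : Fin m, y k • (if (k : ℕ) = m - 1 then
      L.δ (m + 1) • L.V (m + 1) else 0))
      = (L.δ (m + 1) * y ⟨m - 1, by omega⟩) • L.V (m + 1) := by
    rw [Finset.sum_eq_single (⟨m - 1, by omega⟩ : Fin m)
      (fun b _ hb => by rw [if_neg (fun h => hb (Fin.ext (by simpa using h))), smul_zero])
      (fun h => absurd (Finset.mem_univ _) h)]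
    rw [if_pos rfl, smul_smul, mul_comm]
  have hfirst : (∑ k : Fin m, y k • ∑ i : Fin m, T i k • L.V ((i : ℕ) + 1))
      = tnorm R0 • L.V 1 := by
    have e1 : (∑ k : Fin m, y k • ∑ i : Fin m, T i k • L.V ((i : ℕ) + 1))
        = ∑ k : Fin m, ∑ i : Fin m, (T i k * y k) • L.V ((i : ℕ) + 1) := by
      refine Finset.sum_congr rfl fun k _ => ?_
      rw [Finset.smul_sum]
      refine Finset.sum_congr rfl fun i _ => ?_
      rw [smul_smul, mul_comm]
    rw [e1, Finset.sum_comm]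
    have e2 : ∀ i : Fin m, (∑ k : Fin m, (T i k * y k) • L.V ((i : ℕ) + 1))
        = (if (i : ℕ) = 0 then tnorm R0 else 0) • L.V ((i : ℕ) + 1) := by
      intro i
      rw [← Finset.sum_smul, hy i]
    rw [Finset.sum_congr rfl (fun i _ => e2 i),
      Finset.sum_eq_single (⟨0, by omega⟩ : Fin m)
      (fun b _ hb => by rw [if_neg (fun h => hb (Fin.ext (by simpa using h))), zero_smul])
      (fun h => absurd (Finset.mem_univ _) h)]
    rw [if_pos rfl]
  rw [hfirst, hsec, hV1, smul_smul, mul_inv_cancel₀ hnorm, one_smul, neg_smul]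
  abel
end

section
/- (Theorem 5.1, orthogonality of PTBiCOR sequences) Suppose the PTBiCOR sequences are defined for n = 0,…,k and that ⟨R_n*, L̃(R_n)⟩ ≠ 0 and ⟨L̃^T(P_n*), L̃(P_n)⟩ ≠ 0 for n = 0,…,k. Then for all 0 ≤ i, j ≤ k with i ≠ j: ⟨L̃(R_i), R_j*⟩ = 0 and ⟨L̃(P_i), L̃^T(P_j*)⟩ = 0. -/
open scoped Matrix

/-- The NKP preconditioning operator
`M(X) = X ×₁ Q_N⁻¹ ×₂ Q_{N-1}⁻¹ ⋯ ×_N Q₁⁻¹`; here `Q n` denotes the matrix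
`Q_{N+1-n} ∈ ℝ^{Iₙ × Iₙ}` acting on mode `n`. -/
noncomputable def precondOp {N : ℕ} {I : Fin N → ℕ}
    (Q : ∀ n, Matrix (Fin (I n)) (Fin (I n)) ℝ) (X : Tensor I) : Tensor I :=
  fun i => ∑ j : ∀ n, Fin (I n), (∏ n, (Q n)⁻¹ (i n) (j n)) * X j

/-- The transposed preconditioning operator `M^T`, with each inverse replaced
by its transpose. -/
noncomputable def precondOpT {N : ℕ} {I : Fin N → ℕ}
    (Q : ∀ n, Matrix (Fin (I n)) (Fin (I n)) ℝ) (X : Tensor I) : Tensor I :=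
  fun i => ∑ j : ∀ n, Fin (I n), (∏ n, ((Q n)⁻¹)ᵀ (i n) (j n)) * X j

/-- The (T)BiCOR sequences, defined for `n = 0,…,k`, for abstract operators
`Lop` (the Sylvester operator, possibly preconditioned) and `LopT` (its transpose). -/
structure BiCORSeq {N : ℕ} {I : Fin N → ℕ}
    (Lop LopT : Tensor I → Tensor I) (D X0 : Tensor I) (k : ℕ) where
  X : ℕ → Tensor I
  R : ℕ → Tensor I
  Rs : ℕ → Tensor I
  P : ℕ → Tensor I
  Ps : ℕ → Tensor I
  a : ℕ → ℝ
  b : ℕ → ℝ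
  hX0 : X 0 = X0
  hR0 : R 0 = D - Lop X0
  hRs0 : Rs 0 = Lop (R 0)
  hP0 : P 0 = R 0
  hPs0 : Ps 0 = Rs 0
  ha : ∀ n, n < k →
    a n = tinner (Rs n) (Lop (R n)) / tinner (LopT (Ps n)) (Lop (P n))
  hX : ∀ n, n < k → X (n + 1) = X n + a n • P n
  hR : ∀ n, n < k → R (n + 1) = R n - a n • Lop (P n)
  hRs : ∀ n, n < k → Rs (n + 1) = Rs n - a n • LopT (Ps n)
  hb : ∀ n, n < k →
    b n = tinner (Rs (n + 1)) (Lop (R (n + 1))) / tinner (Rs n) (Lop (R n))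
  hP : ∀ n, n < k → P (n + 1) = R (n + 1) + b n • P n
  hPs : ∀ n, n < k → Ps (n + 1) = Rs (n + 1) + b n • Ps n

section Helpers

variable {N : ℕ} {I : Fin N → ℕ}

lemma tinner_comm (X Y : Tensor I) : tinner X Y = tinner Y X := by
  simp [tinner, mul_comm]

lemma tinner_add_left (X Y Z : Tensor I) :
    tinner (X + Y) Z = tinner X Z + tinner Y Z := by
  simp [tinner, add_mul, Finset.sum_add_distrib]

lemma tinner_smul_left (c : ℝ) (X Y : Tensor I) :
    tinner (c • X) Y = c * tinner X Y := by
  simp [tinner, Finset.mul_sum, mul_assoc]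

lemma tinner_sub_right (X Y Z : Tensor I) :
    tinner X (Y - Z) = tinner X Y - tinner X Z := by
  simp [tinner, mul_sub, Finset.sum_sub_distrib]

lemma tinner_smul_right (c : ℝ) (X Y : Tensor I) :
    tinner X (c • Y) = c * tinner X Y := by
  rw [tinner_comm, tinner_smul_left, tinner_comm]

lemma sylvOp_affine (A : ∀ n, Matrix (Fin (I n)) (Fin (I n)) ℝ) (c : ℝ)
    (X Y : Tensor I) : sylvOp A (X + c • Y) = sylvOp A X + c • sylvOp A Y := by
  funext i
  simp only [sylvOp, Pi.add_apply, Pi.smul_apply, smul_eq_mul, mul_add,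
    Finset.sum_add_distrib, Finset.mul_sum]
  ring_nf
  congr 1
  refine Finset.sum_congr rfl fun n _ => Finset.sum_congr rfl fun j _ => by ring

lemma precondOp_affine (Q : ∀ n, Matrix (Fin (I n)) (Fin (I n)) ℝ) (c : ℝ)
    (X Y : Tensor I) :
    precondOp Q (X + c • Y) = precondOp Q X + c • precondOp Q Y := by
  funext i
  simp only [precondOp, Pi.add_apply, Pi.smul_apply, smul_eq_mul, mul_add,
    Finset.sum_add_distrib, Finset.mul_sum]
  congr 1
  exact Finset.sum_congr rfl fun j _ => by ring

lemma precondOpT_affine (Q : ∀ n, Matrix (Fin (I n)) (Fin (I n)) ℝ) (c : ℝ)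
    (X Y : Tensor I) :
    precondOpT Q (X + c • Y) = precondOpT Q X + c • precondOpT Q Y := by
  funext i
  simp only [precondOpT, Pi.add_apply, Pi.smul_apply, smul_eq_mul, mul_add,
    Finset.sum_add_distrib, Finset.mul_sum]
  congr 1
  exact Finset.sum_congr rfl fun j _ => by ring

lemma tinner_sylvOp (A : ∀ n, Matrix (Fin (I n)) (Fin (I n)) ℝ)
    (X Y : Tensor I) : tinner (sylvOp A X) Y = tinner X (sylvOpT A Y) := by
  simp only [tinner, sylvOp, sylvOpT, Finset.sum_mul, Finset.mul_sum]
  rw [Finset.sum_comm]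
  conv_rhs => rw [Finset.sum_comm]
  refine Finset.sum_congr rfl fun n _ => ?_
  rw [← Fintype.sum_prod_type
      (f := fun p : ((m : Fin N) → Fin (I m)) × Fin (I n) =>
        A n (p.1 n) p.2 * X (Function.update p.1 n p.2) * Y p.1),
    ← Fintype.sum_prod_type
      (f := fun p : ((m : Fin N) → Fin (I m)) × Fin (I n) =>
        X p.1 * ((A n)ᵀ (p.1 n) p.2 * Y (Function.update p.1 n p.2)))]
  refine Fintype.sum_equiv
    ⟨fun p => (Function.update p.1 n p.2, p.1 n),
     fun p => (Function.update p.1 n p.2, p.1 n), ?_, ?_⟩ _ _ ?_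
  · intro p
    simp [Function.update_idem]
  · intro p
    simp [Function.update_idem]
  · intro p
    simp only [Equiv.coe_fn_mk, Matrix.transpose_apply, Function.update_self,
      Function.update_idem, Function.update_eq_self]
    ring

lemma tinner_precondOp (Q : ∀ n, Matrix (Fin (I n)) (Fin (I n)) ℝ)
    (X Y : Tensor I) :
    tinner (precondOp Q X) Y = tinner X (precondOpT Q Y) := by
  simp only [tinner, precondOp, precondOpT, Finset.sum_mul, Finset.mul_sum]
  rw [Finset.sum_comm]
  refine Finset.sum_congr rfl fun i _ => Finset.sum_congr rfl fun j _ => by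
    simp only [Matrix.transpose_apply]
    ring

end Helpers

section Key

variable {N : ℕ} {I : Fin N → ℕ}

lemma bicor_key (S St : Tensor I → Tensor I)
    (hS : ∀ (c : ℝ) (x y : Tensor I), S (x + c • y) = S x + c • S y)
    (hSt : ∀ (c : ℝ) (x y : Tensor I), St (x + c • y) = St x + c • St y)
    (hadj : ∀ x y : Tensor I, tinner (S x) y = tinner x (St y))
    (k : ℕ) (R Rs P Ps : ℕ → Tensor I) (a b : ℕ → ℝ)
    (hP0 : P 0 = R 0) (hPs0 : Ps 0 = Rs 0)
    (ha : ∀ n, n < k →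
      a n = tinner (Rs n) (S (R n)) / tinner (St (Ps n)) (S (P n)))
    (hR : ∀ n, n < k → R (n + 1) = R n - a n • S (P n))
    (hRs : ∀ n, n < k → Rs (n + 1) = Rs n - a n • St (Ps n))
    (hb : ∀ n, n < k →
      b n = tinner (Rs (n + 1)) (S (R (n + 1))) / tinner (Rs n) (S (R n)))
    (hP : ∀ n, n < k → P (n + 1) = R (n + 1) + b n • P n)
    (hPs : ∀ n, n < k → Ps (n + 1) = Rs (n + 1) + b n • Ps n)
    (hnb1 : ∀ n, n ≤ k → tinner (Rs n) (S (R n)) ≠ 0)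
    (hnb2 : ∀ n, n ≤ k → tinner (St (Ps n)) (S (P n)) ≠ 0) :
    ∀ n, n ≤ k → ∀ j, j < n →
      tinner (S (R n)) (Rs j) = 0 ∧ tinner (S (P n)) (St (Ps j)) = 0 := by
  have hφ : ∀ n, n ≤ k → tinner (S (R n)) (Rs n) ≠ 0 := by
    intro n hn; rw [tinner_comm]; exact hnb1 n hn
  have hψ : ∀ n, n ≤ k → tinner (S (P n)) (St (Ps n)) ≠ 0 := by
    intro n hn; rw [tinner_comm]; exact hnb2 n hn
  have ha' : ∀ n, n < k →
      a n = tinner (S (R n)) (Rs n) / tinner (S (P n)) (St (Ps n)) := by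
    intro n hn
    rw [ha n hn, tinner_comm (Rs n), tinner_comm (St (Ps n))]
  have hb' : ∀ n, n < k →
      b n = tinner (S (R (n+1))) (Rs (n+1)) / tinner (S (R n)) (Rs n) := by
    intro n hn
    rw [hb n hn, tinner_comm (Rs (n+1)), tinner_comm (Rs n)]
  have hane : ∀ n, n < k → a n ≠ 0 := by
    intro n hn
    rw [ha' n hn]
    exact div_ne_zero (hφ n hn.le) (hψ n hn.le)
  intro n
  induction n with
  | zero => intro _ j hj; omega
  | succ n IH =>
    intro hnk j hjn
    have hnltk : n < k := hnk
    have IH' : ∀ j, j < n → tinner (S (R n)) (Rs j) = 0 ∧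
        tinner (S (P n)) (St (Ps j)) = 0 := IH hnltk.le
    have eSR : S (R (n+1)) = S (R n) + (-(a n)) • S (S (P n)) := by
      rw [hR n hnltk, sub_eq_add_neg, ← neg_smul, hS]
    -- cross terms ⟨S Pn, St (Rs m)⟩
    have hcross0 : tinner (S (P n)) (St (Rs 0)) =
        tinner (S (P n)) (St (Ps 0)) := by rw [hPs0]
    have hcrossS : ∀ m, m < k → tinner (S (P n)) (St (Rs (m+1))) =
        tinner (S (P n)) (St (Ps (m+1))) -
          b m * tinner (S (P n)) (St (Ps m)) := by
      intro m hmk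
      have hrs : Rs (m+1) = Ps (m+1) + (-(b m)) • Ps m := by
        rw [hPs m hmk]; module
      rw [hrs, hSt]
      rw [show St (Ps (m+1)) + (-(b m)) • St (Ps m)
          = St (Ps (m+1)) - b m • St (Ps m) by module]
      rw [tinner_sub_right, tinner_smul_right]
    -- step 1
    have hphi : ∀ j, j ≤ n → tinner (S (R (n+1))) (Rs j) = 0 := by
      intro j hj
      have expand : tinner (S (R (n+1))) (Rs j) =
          tinner (S (R n)) (Rs j) - a n * tinner (S (P n)) (St (Rs j)) := by
        rw [eSR, tinner_add_left, tinner_smul_left, hadj (S (P n))]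
        ring
      rcases lt_or_eq_of_le hj with hjlt | rfl
      · have h1 : tinner (S (R n)) (Rs j) = 0 := (IH' j hjlt).1
        have h2 : tinner (S (P n)) (St (Rs j)) = 0 := by
          rcases j with _ | m
          · rw [hcross0]; exact (IH' 0 hjlt).2
          · rw [hcrossS m (by omega), (IH' (m+1) hjlt).2,
              (IH' m (by omega)).2]
            ring
        rw [expand, h1, h2]; ring
      · have h2 : tinner (S (P j)) (St (Rs j)) =
            tinner (S (P j)) (St (Ps j)) := by
          rcases j with _ | m
          · exact hcross0
          · rw [hcrossS m (by omega), (IH' m (by omega)).2]; ring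
        rw [expand, h2, ha' j hnltk,
          div_mul_cancel₀ _ (hψ j hnltk.le), sub_self]
    -- step 2
    have hpsi : ∀ j, j ≤ n → tinner (S (P (n+1))) (St (Ps j)) = 0 := by
      intro j hj
      have hjk : j < k := by omega
      have han := hane j hjk
      have eq2 : a j • St (Ps j) = Rs j - Rs (j+1) := by
        rw [hRs j hjk]; module
      have eq4 : a j * tinner (S (R (n+1))) (St (Ps j)) =
          tinner (S (R (n+1))) (Rs j) - tinner (S (R (n+1))) (Rs (j+1)) := by
        rw [← tinner_smul_right, eq2, tinner_sub_right]
      have eq3 : tinner (S (P (n+1))) (St (Ps j)) =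
          tinner (S (R (n+1))) (St (Ps j)) +
            b n * tinner (S (P n)) (St (Ps j)) := by
        rw [hP n hnltk, hS, tinner_add_left, tinner_smul_left]
      rcases lt_or_eq_of_le hj with hjlt | rfl
      · have h0 : a j * tinner (S (R (n+1))) (St (Ps j)) = 0 := by
          rw [eq4, hphi j hj, hphi (j+1) (by omega)]; ring
        have h1 : tinner (S (R (n+1))) (St (Ps j)) = 0 :=
          (mul_eq_zero.mp h0).resolve_left han
        rw [eq3, h1, (IH' j hjlt).2]; ring
      · have h5 : tinner (S (R (j+1))) (St (Ps j)) * a j =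
            - tinner (S (R (j+1))) (Rs (j+1)) := by
          rw [mul_comm, eq4, hphi j le_rfl]; ring
        have h6 : tinner (S (R (j+1))) (St (Ps j)) =
            - tinner (S (R (j+1))) (Rs (j+1)) / a j :=
          (eq_div_iff han).mpr h5
        rw [eq3, h6, hb' j hnltk, ha' j hnltk, div_div_eq_mul_div]
        have hx := hφ j hnltk.le
        field_simp
        ring
    exact ⟨hphi j (by omega), hpsi j (by omega)⟩

end Key


/-- Theorem 5.1, orthogonality of PTBiCOR sequences: for the
preconditioned operator `L̃ = M ∘ L` and `L̃^T = L^T ∘ M^T`, with no breakdown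
up to step `k`, `⟨L̃(R_i), R_j*⟩ = 0` and `⟨L̃(P_i), L̃^T(P_j*)⟩ = 0` for `i ≠ j`. -/
theorem ptbicor_orthogonality {N : ℕ} (hN : 1 ≤ N) (I : Fin N → ℕ)
    (hI : ∀ n, 0 < I n)
    (A : ∀ n, Matrix (Fin (I n)) (Fin (I n)) ℝ)
    (Q : ∀ n, Matrix (Fin (I n)) (Fin (I n)) ℝ)
    (hQ : ∀ n, IsUnit (Q n).det)
    (Dt X0 : Tensor I) (k : ℕ)
    (T : BiCORSeq (precondOp Q ∘ sylvOp A) (sylvOpT A ∘ precondOpT Q) Dt X0 k)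
    (hnb1 : ∀ n, n ≤ k →
      tinner (T.Rs n) ((precondOp Q ∘ sylvOp A) (T.R n)) ≠ 0)
    (hnb2 : ∀ n, n ≤ k →
      tinner ((sylvOpT A ∘ precondOpT Q) (T.Ps n))
        ((precondOp Q ∘ sylvOp A) (T.P n)) ≠ 0)
    (i j : ℕ) (hi : i ≤ k) (hj : j ≤ k) (hij : i ≠ j) :
    tinner ((precondOp Q ∘ sylvOp A) (T.R i)) (T.Rs j) = 0 ∧
      tinner ((precondOp Q ∘ sylvOp A) (T.P i))
        ((sylvOpT A ∘ precondOpT Q) (T.Ps j)) = 0 := by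
  let S : Tensor I → Tensor I := precondOp Q ∘ sylvOp A
  let St : Tensor I → Tensor I := sylvOpT A ∘ precondOpT Q
  have hS : ∀ (c : ℝ) (x y : Tensor I), S (x + c • y) = S x + c • S y := by
    intro c x y
    simp only [S, Function.comp_apply, sylvOp_affine, precondOp_affine]
  have hSt : ∀ (c : ℝ) (x y : Tensor I), St (x + c • y) = St x + c • St y := by
    intro c x y
    simp only [St, Function.comp_apply, precondOpT_affine, sylvOpT,
      sylvOp_affine]
  have hadj : ∀ x y : Tensor I, tinner (S x) y = tinner x (St y) := by
    intro x y
    simp only [S, St, Function.comp_apply]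
    rw [tinner_precondOp, tinner_sylvOp]
  rcases Nat.lt_or_ge j i with hji | hij'
  · exact bicor_key S St hS hSt hadj k T.R T.Rs T.P T.Ps T.a T.b T.hP0 T.hPs0
      T.ha T.hR T.hRs T.hb T.hP T.hPs hnb1 hnb2 i hi j hji
  · have hijlt : i < j := by omega
    -- mirrored application
    have hadj' : ∀ x y : Tensor I, tinner (St x) y = tinner x (S y) := by
      intro x y
      rw [tinner_comm (St x) y, ← hadj, tinner_comm]
    have e1 : ∀ n, tinner (T.R n) (St (T.Rs n)) =
        tinner (T.Rs n) (S (T.R n)) := by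
      intro n
      rw [← hadj, tinner_comm]
    have haM : ∀ n, n < k → T.a n =
        tinner (T.R n) (St (T.Rs n)) / tinner (S (T.P n)) (St (T.Ps n)) := by
      intro n hn
      rw [T.ha n hn, e1, tinner_comm (St (T.Ps n))]
    have hbM : ∀ n, n < k → T.b n =
        tinner (T.R (n+1)) (St (T.Rs (n+1))) / tinner (T.R n) (St (T.Rs n)) := by
      intro n hn
      rw [T.hb n hn, e1, e1]
    have hnb1M : ∀ n, n ≤ k → tinner (T.R n) (St (T.Rs n)) ≠ 0 := by
      intro n hn
      rw [e1]; exact hnb1 n hn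
    have hnb2M : ∀ n, n ≤ k → tinner (S (T.P n)) (St (T.Ps n)) ≠ 0 := by
      intro n hn
      rw [tinner_comm]; exact hnb2 n hn
    obtain ⟨h1, h2⟩ := bicor_key St S hSt hS hadj' k T.Rs T.R T.Ps T.P T.a T.b
      T.hPs0 T.hP0 haM T.hRs T.hR hbM T.hPs T.hP hnb1M hnb2M j hj i hijlt
    constructor
    · rw [hadj, tinner_comm]; exact h1
    · rw [tinner_comm]; exact h2
end
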